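/- arXiv:2209.08416 — 11 statements merged into one kernel-verified Lean document; each statement's English description precedes it below -/
import Mathlib

section
/- If f : ℝ → ℝ is positive and nonincreasing, x is a probability vector on a finite set I, F : I → ℝ is any function, and y_i = x_i f(F_i) / (∑_k x_k f(F_k)), then ∑_i y_i F_i ≤ ∑_i x_i F_i. -/
open Finset

theorem distorted_average_le {I : Type*} [Fintype I] [Nonempty I]
    (x : I → ℝ) (hx : ∀ i, 0 ≤ x i) (hsum : ∑ i, x i = 1)
    (f : ℝ → ℝ) (hfpos : ∀ t, 0 < f t) (hfmono : Antitone f)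
    (F : I → ℝ) (y : I → ℝ)
    (hy : ∀ i, y i = x i * f (F i) / (∑ k, x k * f (F k))) :
    ∑ i, y i * F i ≤ ∑ i, x i * F i := by
  set S : ℝ := ∑ k, x k * f (F k) with hS
  set A : ℝ := ∑ i, x i * f (F i) * F i with hA
  set B : ℝ := ∑ i, x i * F i with hB
  have hSpos : 0 < S := by
    obtain ⟨i, hi⟩ : ∃ i, x i ≠ 0 := by
      by_contra h
      push_neg at h
      simp [h] at hsum
    have h1 : 0 < x i * f (F i) :=
      mul_pos ((hx i).lt_of_ne (Ne.symm hi)) (hfpos _)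
    calc (0:ℝ) < x i * f (F i) := h1
      _ ≤ S := Finset.single_le_sum (f := fun k => x k * f (F k))
          (fun k _ => mul_nonneg (hx k) (hfpos _).le) (mem_univ i)
  have key : 0 ≤ ∑ i, ∑ j, x i * x j * ((F i - F j) * (f (F j) - f (F i))) := by
    refine Finset.sum_nonneg fun i _ => Finset.sum_nonneg fun j _ => ?_
    refine mul_nonneg (mul_nonneg (hx i) (hx j)) ?_
    rcases le_total (F i) (F j) with h | h
    · nlinarith [hfmono h]
    · nlinarith [hfmono h]
  have expand : ∑ i, ∑ j, x i * x j * ((F i - F j) * (f (F j) - f (F i)))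
      = 2 * (S * B - A) := by
    have : ∀ i, ∑ j, x i * x j * ((F i - F j) * (f (F j) - f (F i)))
        = x i * F i * S - x i * F i * f (F i) * (∑ j, x j) - x i * A
          + x i * f (F i) * B := by
      intro i
      rw [hS, hA, hB, Finset.mul_sum, Finset.mul_sum, Finset.mul_sum,
        Finset.mul_sum, ← Finset.sum_sub_distrib, ← Finset.sum_sub_distrib,
        ← Finset.sum_add_distrib]
      exact Finset.sum_congr rfl fun j _ => by ring
    rw [Finset.sum_congr rfl fun i _ => this i]
    simp only [hsum, mul_one]
    rw [Finset.sum_add_distrib, Finset.sum_sub_distrib, Finset.sum_sub_distrib,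
      ← Finset.sum_mul, ← Finset.sum_mul, ← Finset.sum_mul]
    have hA' : ∑ i, x i * F i * f (F i) = A := by
      rw [hA]; exact Finset.sum_congr rfl fun i _ => by ring
    rw [hA', hsum, ← hB, ← hS]
    ring
  have hAB : A ≤ S * B := by linarith
  have hylhs : ∑ i, y i * F i = A / S := by
    rw [hA, Finset.sum_div]
    exact Finset.sum_congr rfl fun i _ => by rw [hy i]; ring
  rw [hylhs, div_le_iff₀ hSpos]
  linarith [hAB]
end

section
/- If g : ℝ → ℝ is positive and nondecreasing, x is a probability vector on a finite set I, F : I → ℝ, and y_i = x_i g(F_i) / (∑_k x_k g(F_k)), then ∑_i y_i F_i ≥ ∑_i x_i F_i. -/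
open Finset

theorem distorted_average_ge {I : Type*} [Fintype I] [Nonempty I]
    (x : I → ℝ) (hx : ∀ i, 0 ≤ x i) (hsum : ∑ i, x i = 1)
    (g : ℝ → ℝ) (hgpos : ∀ t, 0 < g t) (hgmono : Monotone g)
    (F : I → ℝ) (y : I → ℝ)
    (hy : ∀ i, y i = x i * g (F i) / (∑ k, x k * g (F k))) :
    ∑ i, y i * F i ≥ ∑ i, x i * F i := by
  set S := ∑ k, x k * g (F k) with hS
  have hSpos : 0 < S := by
    obtain ⟨i, hi⟩ : ∃ i, 0 < x i := by
      by_contra h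
      push_neg at h
      have hz : ∀ i, x i = 0 := fun i => le_antisymm (h i) (hx i)
      simp [hz] at hsum
    calc (0:ℝ) < x i * g (F i) := mul_pos hi (hgpos _)
      _ ≤ S := Finset.single_le_sum
          (fun j _ => mul_nonneg (hx j) (hgpos _).le) (mem_univ i)
  have h0 : 0 ≤ ∑ i, ∑ j, x i * x j * ((g (F i) - g (F j)) * (F i - F j)) := by
    apply Finset.sum_nonneg; intro i _
    apply Finset.sum_nonneg; intro j _
    apply mul_nonneg (mul_nonneg (hx i) (hx j))
    rcases le_total (F i) (F j) with h | h
    · nlinarith [hgmono h]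
    · exact mul_nonneg (by linarith [hgmono h]) (by linarith)
  have expand : ∑ i, ∑ j, x i * x j * ((g (F i) - g (F j)) * (F i - F j))
      = 2 * (∑ i, x i * g (F i) * F i) - 2 * (S * ∑ i, x i * F i) := by
    have hterm : ∀ i j : I, x i * x j * ((g (F i) - g (F j)) * (F i - F j))
        = (x i * g (F i) * F i) * x j - (x i * g (F i)) * (x j * F j)
          - (x i * F i) * (x j * g (F j)) + x i * (x j * g (F j) * F j) := by
      intro i j; ring
    simp only [hterm, Finset.sum_add_distrib, Finset.sum_sub_distrib,
      ← Finset.mul_sum, ← Finset.sum_mul, hsum, ← hS]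
    ring
  have key : S * ∑ i, x i * F i ≤ ∑ i, x i * g (F i) * F i := by linarith [expand ▸ h0]
  have hyF : ∑ i, y i * F i = (∑ i, x i * g (F i) * F i) / S := by
    rw [Finset.sum_div]
    exact Finset.sum_congr rfl fun i _ => by rw [hy i]; ring
  rw [hyF, ge_iff_le, le_div_iff₀ hSpos, mul_comm]
  exact key
end

section
/- (Imitation of greater than average success yields Positive Correlation.) Let F̄ = ∑_k x_k F_k. Suppose ρ_{ij} = f(F_i) λ_j x_j r_j where f is positive and nonincreasing, λ_j > 0, and sgn(r_j) = sgn(max(F_j − F̄, 0)). Then ∑_{i,j} x_i ρ_{ij}(F_j − F_i) ≥ 0, with equality if and only if x is a population equilibrium (i.e., F_j = F̄ for all j with x_j > 0). -/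
open Finset

theorem imitation_of_above_average_success_PC {I : Type*} [Fintype I] [Nonempty I]
    (x : I → ℝ) (hx : ∀ i, 0 ≤ x i) (hsum : ∑ i, x i = 1)
    (F : I → ℝ)
    (f : ℝ → ℝ) (hfpos : ∀ t, 0 < f t) (hfmono : Antitone f)
    (lam : I → ℝ) (hlam : ∀ j, 0 < lam j)
    (r : I → ℝ)
    (hr_pos : ∀ j, (∑ k, x k * F k) < F j → 0 < r j)
    (hr_zero : ∀ j, F j ≤ (∑ k, x k * F k) → r j = 0)
    (ρ : I → I → ℝ) (hρ : ∀ i j, ρ i j = f (F i) * lam j * x j * r j) :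
    0 ≤ ∑ i, ∑ j, x i * ρ i j * (F j - F i) ∧
    ((∑ i, ∑ j, x i * ρ i j * (F j - F i)) = 0 ↔
      ∀ j, 0 < x j → F j = (∑ k, x k * F k)) := by
  set Fbar : ℝ := ∑ k, x k * F k with hFbar
  set A : I → ℝ := fun j => ∑ i, x i * f (F i) * (F j - F i) with hA
  -- rewrite the double sum
  have hS : (∑ i, ∑ j, x i * ρ i j * (F j - F i))
      = ∑ j, lam j * x j * r j * A j := by
    rw [Finset.sum_comm]
    refine Finset.sum_congr rfl fun j _ => ?_
    rw [hA, Finset.mul_sum]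
    refine Finset.sum_congr rfl fun i _ => ?_
    rw [hρ]; ring
  have hAbound : ∀ j, f (F j) * (F j - Fbar) ≤ A j := by
    intro j
    have h1 : f (F j) * (F j - Fbar) = ∑ i, x i * f (F j) * (F j - F i) := by
      have : ∑ i, x i * f (F j) * (F j - F i)
          = f (F j) * F j * (∑ i, x i) - f (F j) * (∑ i, x i * F i) := by
        rw [Finset.mul_sum, Finset.mul_sum, ← Finset.sum_sub_distrib]
        exact Finset.sum_congr rfl fun i _ => by ring
      rw [this, hsum, hFbar]
      have : (∑ k, x k * F k) = ∑ i, x i * F i := rfl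
      rw [this]; ring
    rw [h1, hA]
    refine Finset.sum_le_sum fun i _ => ?_
    have key : 0 ≤ (f (F i) - f (F j)) * (F j - F i) := by
      rcases le_total (F i) (F j) with h | h
      · exact mul_nonneg (sub_nonneg.mpr (hfmono h)) (sub_nonneg.mpr h)
      · nlinarith [sub_nonpos.mpr (hfmono h), sub_nonpos.mpr h]
    nlinarith [mul_nonneg (hx i) key]
  have hterm_nonneg : ∀ j ∈ Finset.univ, 0 ≤ lam j * x j * r j * A j := by
    intro j _
    rcases le_or_gt (F j) Fbar with h | h
    · rw [hr_zero j h]; simp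
    · have hApos : 0 < A j :=
        lt_of_lt_of_le (mul_pos (hfpos (F j)) (sub_pos.mpr h)) (hAbound j)
      exact mul_nonneg (mul_nonneg (mul_nonneg (hlam j).le (hx j))
        (hr_pos j h).le) hApos.le
  have hterm_pos : ∀ j, 0 < x j → Fbar < F j → 0 < lam j * x j * r j * A j := by
    intro j hxj h
    have hApos : 0 < A j :=
      lt_of_lt_of_le (mul_pos (hfpos (F j)) (sub_pos.mpr h)) (hAbound j)
    exact mul_pos (mul_pos (mul_pos (hlam j) hxj) (hr_pos j h)) hApos
  constructor
  · rw [hS]; exact Finset.sum_nonneg hterm_nonneg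
  constructor
  · intro h0 j hxj
    by_contra hne
    obtain ⟨k, hxk, hFk⟩ : ∃ k, 0 < x k ∧ Fbar < F k := by
      by_contra hcon
      push_neg at hcon
      have h1 : ∑ k, x k * (Fbar - F k) = 0 := by
        have : ∑ k, x k * (Fbar - F k)
            = Fbar * (∑ k, x k) - ∑ k, x k * F k := by
          rw [Finset.mul_sum, ← Finset.sum_sub_distrib]
          exact Finset.sum_congr rfl fun k _ => by ring
        rw [this, hsum, ← hFbar]; ring
      have h2 : ∀ k ∈ Finset.univ, 0 ≤ x k * (Fbar - F k) := by
        intro k _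
        rcases eq_or_lt_of_le (hx k) with hk | hk
        · rw [← hk]; ring_nf; exact le_refl 0
        · exact mul_nonneg hk.le (sub_nonneg.mpr (hcon k hk))
      have := (Finset.sum_eq_zero_iff_of_nonneg h2).mp h1 j (mem_univ j)
      have hFj : F j = Fbar := by
        rcases mul_eq_zero.mp this with h | h
        · exact absurd h (ne_of_gt hxj)
        · linarith [sub_eq_zero.mp h]
      exact hne hFj
    rw [hS] at h0
    have := (Finset.sum_eq_zero_iff_of_nonneg hterm_nonneg).mp h0 k (mem_univ k)
    exact absurd this (ne_of_gt (hterm_pos k hxk hFk))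
  · intro heq
    rw [hS]
    refine Finset.sum_eq_zero fun j _ => ?_
    rcases eq_or_lt_of_le (hx j) with hxj | hxj
    · rw [← hxj]; ring
    · rw [hr_zero j (le_of_eq (heq j hxj))]; ring
end

section
/- (Imitation driven by less than average success yields Positive Correlation.) Let F̄ = ∑_k x_k F_k. Suppose ρ_{ij} = λ_i r_i x_j g(F_j) where g is positive and nondecreasing, λ_i > 0, and sgn(r_i) = sgn(max(F̄ − F_i, 0)). Then ∑_{i,j} x_i ρ_{ij}(F_j − F_i) ≥ 0, with equality if and only if x is a population equilibrium. -/
open Finset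

theorem imitation_driven_by_below_average_success_PC {I : Type*} [Fintype I] [Nonempty I]
    (x : I → ℝ) (hx : ∀ i, 0 ≤ x i) (hsum : ∑ i, x i = 1)
    (F : I → ℝ)
    (g : ℝ → ℝ) (hgpos : ∀ t, 0 < g t) (hgmono : Monotone g)
    (lam : I → ℝ) (hlam : ∀ i, 0 < lam i)
    (r : I → ℝ)
    (hr_pos : ∀ i, F i < (∑ k, x k * F k) → 0 < r i)
    (hr_zero : ∀ i, (∑ k, x k * F k) ≤ F i → r i = 0)
    (ρ : I → I → ℝ) (hρ : ∀ i j, ρ i j = lam i * r i * x j * g (F j)) :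
    0 ≤ ∑ i, ∑ j, x i * ρ i j * (F j - F i) ∧
    ((∑ i, ∑ j, x i * ρ i j * (F j - F i)) = 0 ↔
      ∀ i j, 0 < x i → 0 < x j → F i = F j) := by
  set Fb := ∑ k, x k * F k with hFb
  have hrepr : ∀ i, ∑ j, x i * ρ i j * (F j - F i)
      = (x i * lam i * r i) * ∑ j, x j * g (F j) * (F j - F i) := by
    intro i
    rw [Finset.mul_sum]
    refine Finset.sum_congr rfl fun j _ => ?_
    rw [hρ]; ring
  have hinner : ∀ i, g (F i) * (Fb - F i) ≤ ∑ j, x j * g (F j) * (F j - F i) := by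
    intro i
    have h1 : ∑ j, x j * g (F i) * (F j - F i) = g (F i) * (Fb - F i) := by
      have : ∑ j, x j * g (F i) * (F j - F i)
          = g (F i) * ((∑ j, x j * F j) - (∑ j, x j) * F i) := by
        simp only [mul_sub, Finset.mul_sum, Finset.sum_mul]
        rw [← Finset.sum_sub_distrib]
        exact Finset.sum_congr rfl fun j _ => by ring
      rw [this, hsum, hFb]; ring
    rw [← h1]
    refine Finset.sum_le_sum fun j _ => ?_
    have hnn : 0 ≤ (g (F j) - g (F i)) * (F j - F i) := by
      rcases le_total (F i) (F j) with h | h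
      · exact mul_nonneg (sub_nonneg.2 (hgmono h)) (sub_nonneg.2 h)
      · have := mul_nonneg (sub_nonneg.2 (hgmono h)) (sub_nonneg.2 h)
        nlinarith
    nlinarith [mul_nonneg (hx j) hnn]
  have hterm : ∀ i, 0 ≤ (x i * lam i * r i) * ∑ j, x j * g (F j) * (F j - F i) := by
    intro i
    rcases lt_or_ge (F i) Fb with h | h
    · have hr := hr_pos i h
      have hin : 0 < ∑ j, x j * g (F j) * (F j - F i) :=
        lt_of_lt_of_le (mul_pos (hgpos (F i)) (sub_pos.2 h)) (hinner i)
      exact mul_nonneg (mul_nonneg (mul_nonneg (hx i) (hlam i).le) hr.le) hin.le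
    · rw [hr_zero i h]; ring_nf; simp
  have hsum_eq : ∑ i, ∑ j, x i * ρ i j * (F j - F i)
      = ∑ i, (x i * lam i * r i) * ∑ j, x j * g (F j) * (F j - F i) :=
    Finset.sum_congr rfl fun i _ => hrepr i
  constructor
  · rw [hsum_eq]
    exact Finset.sum_nonneg fun i _ => hterm i
  · rw [hsum_eq]
    rw [Finset.sum_eq_zero_iff_of_nonneg fun i _ => hterm i]
    constructor
    · intro hz
      have hge : ∀ i, 0 < x i → Fb ≤ F i := by
        intro i hxi
        by_contra hlt
        push_neg at hlt
        have hr := hr_pos i hlt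
        have hin : 0 < ∑ j, x j * g (F j) * (F j - F i) :=
          lt_of_lt_of_le (mul_pos (hgpos (F i)) (sub_pos.2 hlt)) (hinner i)
        have : 0 < (x i * lam i * r i) * ∑ j, x j * g (F j) * (F j - F i) :=
          mul_pos (mul_pos (mul_pos hxi (hlam i)) hr) hin
        have h0 := hz i (Finset.mem_univ i)
        linarith
      have hz2 : ∑ k, x k * (F k - Fb) = 0 := by
        have : ∑ k, x k * (F k - Fb) = (∑ k, x k * F k) - (∑ k, x k) * Fb := by
          simp only [Finset.sum_mul]
          rw [← Finset.sum_sub_distrib]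
          exact Finset.sum_congr rfl fun k _ => by ring
        rw [this, hsum, ← hFb]; ring
      have heach : ∀ k, 0 < x k → F k = Fb := by
        intro k hxk
        have hnn : ∀ m ∈ Finset.univ, 0 ≤ x m * (F m - Fb) := by
          intro m _
          rcases (hx m).eq_or_lt with h | h
          · rw [← h]; simp
          · exact mul_nonneg h.le (sub_nonneg.2 (hge m h))
        have := (Finset.sum_eq_zero_iff_of_nonneg hnn).1 hz2 k (Finset.mem_univ k)
        have := (mul_eq_zero.1 this).resolve_left (ne_of_gt hxk)
        linarith [sub_eq_zero.1 this]
      intro i j hxi hxj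
      rw [heach i hxi, heach j hxj]
    · intro heq i _
      rcases (hx i).eq_or_lt with h | h
      · rw [← h]; ring
      · have hFi : F i = Fb := by
          have : Fb = ∑ k, x k * F i := by
            rw [hFb]
            refine Finset.sum_congr rfl fun k _ => ?_
            rcases (hx k).eq_or_lt with hk | hk
            · rw [← hk]; ring
            · rw [heq k i hk h]
          rw [this, ← Finset.sum_mul, hsum, one_mul]
        rw [hr_zero i hFi.ge]; ring
end

section
/- Let m ≥ 2, u_1 > 0, and u_2 ∈ (u_1/m, u_1). Then the equation u_2/u_1 = x_2(1 − x_2^m) / (x_1(1 − x_1^m)) with x_1 = 1 − x_2 has a solution x_2* ∈ (0, 1/2). -/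
lemma key_geom_bound (m : ℕ) (hm : 1 ≤ m) (t : ℝ) (h0 : 0 ≤ t) (h1 : t ≤ 1) :
    (m : ℝ) * t ^ (m - 1) * (1 - t) ≤ 1 - t ^ m := by
  have hs : (1 : ℝ) - t ^ m = (1 - t) * ∑ i ∈ Finset.range m, t ^ i := by
    linear_combination geom_sum_mul t m
  have hsum : (m : ℝ) * t ^ (m - 1) ≤ ∑ i ∈ Finset.range m, t ^ i := by
    calc (m : ℝ) * t ^ (m - 1) = ∑ _i ∈ Finset.range m, t ^ (m - 1) := by
          rw [Finset.sum_const, Finset.card_range, nsmul_eq_mul]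
      _ ≤ ∑ i ∈ Finset.range m, t ^ i := by
          refine Finset.sum_le_sum fun i hi => ?_
          have : i ≤ m - 1 := by
            have := Finset.mem_range.mp hi; omega
          exact pow_le_pow_of_le_one h0 h1 this
  rw [hs]
  nlinarith [sub_nonneg.mpr h1]

theorem interior_rest_point_exists
    (m : ℕ) (hm : 2 ≤ m) (u1 u2 : ℝ) (hu1 : 0 < u1)
    (hu2 : u2 ∈ Set.Ioo (u1 / m) u1) :
    ∃ x2 ∈ Set.Ioo (0:ℝ) (1/2),
      u2 / u1 = x2 * (1 - x2 ^ m) / ((1 - x2) * (1 - (1 - x2) ^ m)) := by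
  obtain ⟨hu2l, hu2r⟩ := hu2
  have hmpos : (0 : ℝ) < m := by positivity
  have hu2pos : 0 < u2 := lt_trans (by positivity) hu2l
  have hmu2 : u1 < (m : ℝ) * u2 := by
    have := (div_lt_iff₀ hmpos).mp hu2l
    linarith
  -- choose small ε with (1-ε)^m > u1 / (m * u2)
  set δ : ℝ := u1 / ((m : ℝ) * u2) with hδdef
  have hδ1 : δ < 1 := (div_lt_one (by positivity)).mpr hmu2
  have htend : Filter.Tendsto (fun x : ℝ => (1 - x) ^ m) (nhds 0) (nhds 1) := by
    have hc : Continuous fun x : ℝ => (1 - x) ^ m :=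
      (continuous_const.sub continuous_id).pow m
    have := hc.tendsto 0
    simpa using this
  have hev1 : ∀ᶠ x : ℝ in nhds 0, δ < (1 - x) ^ m :=
    htend.eventually (eventually_gt_nhds hδ1)
  have hev1' : ∀ᶠ x : ℝ in nhdsWithin 0 (Set.Ioi 0), δ < (1 - x) ^ m :=
    eventually_nhdsWithin_of_eventually_nhds hev1
  have hev2 : ∀ᶠ x : ℝ in nhdsWithin 0 (Set.Ioi 0), x ∈ Set.Ioo (0 : ℝ) (1/2) := by
    have : Set.Ioo (0 : ℝ) (1/2) ∈ nhdsWithin 0 (Set.Ioi 0) :=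
      Ioo_mem_nhdsGT_of_mem (by norm_num)
    exact this
  obtain ⟨ε, hεδ, hε0, hε12⟩ :
      ∃ ε : ℝ, δ < (1 - ε) ^ m ∧ 0 < ε ∧ ε < 1/2 := by
    obtain ⟨ε, h1, h2⟩ := (hev1'.and hev2).exists
    exact ⟨ε, h1, h2.1, h2.2⟩
  -- define g
  set g : ℝ → ℝ := fun x => u1 * (x * (1 - x ^ m)) - u2 * ((1 - x) * (1 - (1 - x) ^ m))
    with hgdef
  have hgcont : ContinuousOn g (Set.Icc ε (1/2)) := by
    apply Continuous.continuousOn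
    fun_prop
  -- g ε < 0
  have ht0 : (0 : ℝ) ≤ 1 - ε := by linarith
  have ht1 : (1 : ℝ) - ε ≤ 1 := by linarith
  have hkey := key_geom_bound m (by omega) (1 - ε) ht0 ht1
  have hpowsucc : (1 - ε) * (1 - ε) ^ (m - 1) = (1 - ε) ^ m := by
    rw [← pow_succ']
    congr 1
    omega
  have hgε : g ε < 0 := by
    have h1 : u2 * ((1 - ε) * (1 - (1 - ε) ^ m))
        ≥ u2 * ((1 - ε) * ((m : ℝ) * (1 - ε) ^ (m - 1) * ε)) := by
      apply mul_le_mul_of_nonneg_left _ hu2pos.le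
      apply mul_le_mul_of_nonneg_left _ ht0
      nlinarith [hkey]
    have h2 : u2 * ((1 - ε) * ((m : ℝ) * (1 - ε) ^ (m - 1) * ε))
        = u2 * (m : ℝ) * ε * (1 - ε) ^ m := by
      rw [← hpowsucc]; ring
    have h3 : u1 < u2 * (m : ℝ) * (1 - ε) ^ m := by
      have := (div_lt_iff₀ (show (0:ℝ) < (m:ℝ) * u2 by positivity)).mp hεδ
      nlinarith
    have h4 : u1 * (ε * (1 - ε ^ m)) ≤ u1 * ε := by
      have : (0:ℝ) ≤ ε ^ m := by positivity
      nlinarith [mul_nonneg (mul_nonneg hu1.le hε0.le) this]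
    have h5 : u1 * ε < u2 * (m : ℝ) * ε * (1 - ε) ^ m := by
      nlinarith
    simp only [hgdef]
    linarith [h1, h2 ▸ h1]
  -- g (1/2) > 0
  have hg12 : 0 < g (1/2) := by
    simp only [hgdef]
    have hpow : ((1:ℝ)/2) ^ m < 1 := pow_lt_one₀ (by norm_num) (by norm_num) (by omega)
    have : (1:ℝ) - (1/2) = 1/2 := by norm_num
    rw [this]
    nlinarith [hpow, hu2r, hu2pos]
  -- IVT
  have hmem : (0 : ℝ) ∈ Set.Ioo (g ε) (g (1/2)) := ⟨hgε, hg12⟩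
  have := intermediate_value_Ioo (le_of_lt hε12) hgcont hmem
  obtain ⟨x2, hx2mem, hx2eq⟩ := this
  refine ⟨x2, ⟨lt_trans hε0 hx2mem.1, hx2mem.2⟩, ?_⟩
  have hx2a : 0 < x2 := lt_trans hε0 hx2mem.1
  have hx2b : x2 < 1/2 := hx2mem.2
  have hd1 : (0:ℝ) < 1 - x2 := by linarith
  have hd2 : (0:ℝ) < 1 - (1 - x2) ^ m := by
    have : (1 - x2) ^ m < 1 := pow_lt_one₀ hd1.le (by linarith) (by omega)
    linarith
  have heq : u1 * (x2 * (1 - x2 ^ m)) = u2 * ((1 - x2) * (1 - (1 - x2) ^ m)) := by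
    have : g x2 = 0 := hx2eq
    simp only [hgdef] at this
    linarith
  have hdne : ((1 - x2) * (1 - (1 - x2) ^ m)) ≠ 0 := by positivity
  field_simp
  linarith [heq]
end

section
/- Let m ≥ 2 and define φ(s) = s(1 − s^m)/((1−s)(1 − (1−s)^m)) for s ∈ (0, 1/2]. Then φ is strictly increasing on (0, 1/2], φ(s) → 1/m as s → 0⁺, and φ(1/2) = 1. -/
/-!
Writing `G(x) = ∑_{k<m} x^k`, so that `1 - x^m = (1 - x) G(x)`, the factors `s` and `1 - s` cancel and
`φ(s) = G(s) / G(1 - s)` on `(0, 1)`. For `m ≥ 2` the polynomial `G` is positive and strictly increasing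
on `[0, ∞)`, so the numerator increases and the denominator decreases with `s`; the limit at `0⁺` is
`G(0) / G(1) = 1 / m`, and at `s = 1/2` numerator and denominator coincide.
-/

open Filter Set Finset

theorem geom_sum_strictMonoOn {R : Type*} [Semiring R] [PartialOrder R] [IsStrictOrderedRing R]
    {n : ℕ} (hn : 2 ≤ n) : StrictMonoOn (fun x : R => ∑ i ∈ range n, x ^ i) (Ici 0) := by
  intro x hx y _ hxy
  refine Finset.sum_lt_sum (fun i _ => pow_le_pow_left₀ hx hxy.le i) ⟨1, mem_range.2 hn, ?_⟩
  simpa using hxy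

theorem div_eq_geom_sum_div_geom_sum {K : Type*} [Field K] (n : ℕ) {s : K} (hs₀ : s ≠ 0)
    (hs₁ : s ≠ 1) :
    s * (1 - s ^ n) / ((1 - s) * (1 - (1 - s) ^ n)) =
      (∑ i ∈ range n, s ^ i) / ∑ i ∈ range n, (1 - s) ^ i := by
  rw [← mul_neg_geom_sum s, ← mul_neg_geom_sum (1 - s), sub_sub_cancel, mul_left_comm s,
    mul_div_mul_left _ _ (sub_ne_zero.2 hs₁.symm), mul_div_mul_left _ _ hs₀]

theorem StrictMonoOn.div_comp_one_sub {f : ℝ → ℝ} (hf : StrictMonoOn f (Ici 0))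
    (hpos : ∀ x, 0 ≤ x → 0 < f x) :
    StrictMonoOn (fun s => f s / f (1 - s)) (Icc 0 1) := by
  intro s hs t ht hst
  have hnum : f s < f t := hf hs.1 ht.1 hst
  have hden : f (1 - t) < f (1 - s) :=
    hf (sub_nonneg.2 ht.2) (sub_nonneg.2 hs.2) (by linarith)
  exact div_lt_div₀ hnum hden.le (hpos t ht.1).le (hpos _ (sub_nonneg.2 ht.2))

theorem phi_strict_mono_limit
    (m : ℕ) (hm : 2 ≤ m) (φ : ℝ → ℝ)
    (hφ : ∀ s, φ s = s * (1 - s ^ m) / ((1 - s) * (1 - (1 - s) ^ m))) :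
    StrictMonoOn φ (Ioc (0:ℝ) (1/2)) ∧
    Tendsto φ (nhdsWithin 0 (Ioi (0:ℝ))) (nhds (1 / (m:ℝ))) ∧
    φ (1/2) = 1 := by
  set G : ℝ → ℝ := fun x => ∑ i ∈ range m, x ^ i with hG
  have hG_pos : ∀ x, 0 ≤ x → 0 < G x := fun x hx => geom_sum_pos hx (by omega)
  have hφG : EqOn φ (fun s => G s / G (1 - s)) (Ioo 0 1) := fun s hs =>
    (hφ s).trans (div_eq_geom_sum_div_geom_sum m hs.1.ne' hs.2.ne)
  have hsub : Ioc (0:ℝ) (1/2) ⊆ Ioo 0 1 := Ioc_subset_Ioo_right (by norm_num)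
  refine ⟨?_, ?_, ?_⟩
  · rw [(hφG.mono hsub).congr_strictMonoOn]
    exact ((geom_sum_strictMonoOn hm).div_comp_one_sub hG_pos).mono
      (hsub.trans Ioo_subset_Icc_self)
  · have hG_cont : Continuous G := by fun_prop
    have hlim : Tendsto (fun s => G s / G (1 - s)) (nhds 0) (nhds (G 0 / G 1)) := by
      have hcont : ContinuousAt (fun s => G s / G (1 - s)) 0 :=
        ContinuousAt.div (by fun_prop) (by fun_prop) (by simpa using (hG_pos 1 zero_le_one).ne')
      simpa using hcont.tendsto
    have hG01 : G 0 / G 1 = 1 / m := by simp [hG, zero_geom_sum, show m ≠ 0 by omega]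
    rw [← hG01]
    exact (hlim.mono_left nhdsWithin_le_nhds).congr'
      (eventuallyEq_of_mem (Ioo_mem_nhdsGT one_pos) hφG.symm)
  · rw [hφG ⟨by norm_num, by norm_num⟩]
    norm_num [(hG_pos (1/2) (by norm_num)).ne']
end

section
/- Let m = 2m'+1 be an odd integer with m ≥ 3, and let y_i, y_j > 0 with y_i + y_j = 1 and y_i > y_j. Then ∑_{k=m'+1}^{m} C(m,k) y_i^{k−1} y_j^{m−k} > ∑_{k=m'+1}^{m} C(m,k) y_j^{k−1} y_i^{m−k}. -/
open Finset

lemma pow_mul_le_aux {yi yj : ℝ} (hyj : 0 < yj) (hgt : yj < yi)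
    {a b : ℕ} (hba : b ≤ a) : yj ^ a * yi ^ b ≤ yi ^ a * yj ^ b := by
  have hyi : 0 < yi := hyj.trans hgt
  have h : yj ^ (a - b) ≤ yi ^ (a - b) := pow_le_pow_left₀ hyj.le hgt.le _
  calc yj ^ a * yi ^ b = yj ^ (a - b) * (yj ^ b * yi ^ b) := by
        rw [← pow_sub_mul_pow yj hba]; ring
    _ ≤ yi ^ (a - b) * (yj ^ b * yi ^ b) := by
        apply mul_le_mul_of_nonneg_right h; positivity
    _ = yi ^ a * yj ^ b := by rw [← pow_sub_mul_pow yi hba]; ring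

lemma pow_mul_lt_aux {yi yj : ℝ} (hyj : 0 < yj) (hgt : yj < yi)
    {a b : ℕ} (hba : b < a) : yj ^ a * yi ^ b < yi ^ a * yj ^ b := by
  have hyi : 0 < yi := hyj.trans hgt
  have h : yj ^ (a - b) < yi ^ (a - b) :=
    pow_lt_pow_left₀ hgt hyj.le (by omega)
  calc yj ^ a * yi ^ b = yj ^ (a - b) * (yj ^ b * yi ^ b) := by
        rw [← pow_sub_mul_pow yj hba.le]; ring
    _ < yi ^ (a - b) * (yj ^ b * yi ^ b) := by
        apply mul_lt_mul_of_pos_right h; positivity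
    _ = yi ^ a * yj ^ b := by rw [← pow_sub_mul_pow yi hba.le]; ring

theorem majority_odd_favours_frequent
    (m m' : ℕ) (hm : m = 2 * m' + 1) (hm3 : 3 ≤ m)
    (yi yj : ℝ) (hyi : 0 < yi) (hyj : 0 < yj) (hsum : yi + yj = 1) (hgt : yj < yi) :
    ∑ k ∈ Finset.Icc (m' + 1) m, (m.choose k : ℝ) * yj ^ (k - 1) * yi ^ (m - k)
      < ∑ k ∈ Finset.Icc (m' + 1) m, (m.choose k : ℝ) * yi ^ (k - 1) * yj ^ (m - k) := by
  refine Finset.sum_lt_sum ?_ ⟨m, Finset.mem_Icc.mpr ⟨by omega, le_refl m⟩, ?_⟩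
  · intro k hk
    simp only [Finset.mem_Icc] at hk
    have hC : (0:ℝ) ≤ (m.choose k : ℝ) := by positivity
    have := pow_mul_le_aux hyj hgt (a := k - 1) (b := m - k) (by omega)
    calc (m.choose k : ℝ) * yj ^ (k - 1) * yi ^ (m - k)
        = (m.choose k : ℝ) * (yj ^ (k - 1) * yi ^ (m - k)) := by ring
      _ ≤ (m.choose k : ℝ) * (yi ^ (k - 1) * yj ^ (m - k)) :=
          mul_le_mul_of_nonneg_left this hC
      _ = (m.choose k : ℝ) * yi ^ (k - 1) * yj ^ (m - k) := by ring
  · have hC : (0:ℝ) < (m.choose m : ℝ) := by simp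
    have := pow_mul_lt_aux hyj hgt (a := m - 1) (b := m - m) (by omega)
    calc (m.choose m : ℝ) * yj ^ (m - 1) * yi ^ (m - m)
        = (m.choose m : ℝ) * (yj ^ (m - 1) * yi ^ (m - m)) := by ring
      _ < (m.choose m : ℝ) * (yi ^ (m - 1) * yj ^ (m - m)) :=
          mul_lt_mul_of_pos_left this hC
      _ = (m.choose m : ℝ) * yi ^ (m - 1) * yj ^ (m - m) := by ring
end

section
/- Let m = 2m' be an even integer with m ≥ 4, and let y_i, y_j > 0 with y_i + y_j = 1 and y_i > y_j. Define p_i = (1/2) C(m, m') y_i^{m'} y_j^{m'} + ∑_{k=m'+1}^{m} C(m,k) y_i^{k} y_j^{m−k}, and p_j symmetrically. Then p_i / y_i > p_j / y_j. -/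
open Finset

theorem majority_even_favours_frequent
    (m m' : ℕ) (hm : m = 2 * m') (hm4 : 4 ≤ m)
    (yi yj : ℝ) (hyi : 0 < yi) (hyj : 0 < yj) (hsum : yi + yj = 1) (hgt : yj < yi)
    (pi pj : ℝ)
    (hpi : pi = (1/2) * (m.choose m' : ℝ) * yi ^ m' * yj ^ m'
      + ∑ k ∈ Finset.Icc (m' + 1) m, (m.choose k : ℝ) * yi ^ k * yj ^ (m - k))
    (hpj : pj = (1/2) * (m.choose m' : ℝ) * yj ^ m' * yi ^ m'
      + ∑ k ∈ Finset.Icc (m' + 1) m, (m.choose k : ℝ) * yj ^ k * yi ^ (m - k)) :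
    pj / yj < pi / yi := by
  subst hm
  have h2 : 2 ≤ m' := by omega
  rw [div_lt_div_iff₀ hyj hyi, hpi, hpj]
  set s := Finset.Icc (m' + 1) (2 * m') with hs
  set f : ℕ → ℝ := fun k => ((2*m').choose k : ℝ) *
      (yi^k * yj^(2*m'-k) * yj - yj^k * yi^(2*m'-k) * yi) with hf
  -- each term of f is nonnegative on s
  have hnonneg : ∀ k ∈ s, 0 ≤ f k := by
    intro k hk
    simp only [hs, Finset.mem_Icc] at hk
    obtain ⟨e, rfl⟩ : ∃ e, k = m' + 1 + e := ⟨k - (m'+1), by omega⟩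
    have hc : 2*m' - (m'+1+e) = m' - 1 - e := by omega
    simp only [hf, hc]
    set c := m' - 1 - e with hcdef
    have hk2 : m' + 1 + e = c + (2*e + 2) := by omega
    rw [hk2]
    apply mul_nonneg (by positivity)
    have h1 : yj ^ (2*e) * yj ≤ yi ^ (2*e) * yi := by
      have := pow_le_pow_left₀ hyj.le hgt.le (2*e+1)
      simpa [pow_succ] using this
    have hP : (0:ℝ) < yi^c * yj^c * yi * yj := by positivity
    have h3 := mul_le_mul_of_nonneg_left h1 hP.le
    simp only [pow_add]
    nlinarith [h3]
  -- the sum of f equals the cross difference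
  have e1 : ∑ k ∈ s, f k
      = (∑ k ∈ s, ((2*m').choose k : ℝ) * yi ^ k * yj ^ (2*m' - k)) * yj
        - (∑ k ∈ s, ((2*m').choose k : ℝ) * yj ^ k * yi ^ (2*m' - k)) * yi := by
    rw [Finset.sum_mul, Finset.sum_mul, ← Finset.sum_sub_distrib]
    exact Finset.sum_congr rfl (fun k hk => by simp only [hf]; ring)
  -- key binomial inequality
  have hC : ((2*m').choose m' : ℝ) < 2 * ((2*m').choose (m'+1) : ℝ) := by
    have hCpos : 0 < (2*m').choose m' := Nat.choose_pos (by omega)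
    have hid : (2*m').choose (m'+1) * (m'+1) = (2*m').choose m' * m' := by
      have h := Nat.choose_succ_right_eq (2*m') m'
      rw [show 2*m' - m' = m' from by omega] at h
      exact h
    have : (2*m').choose m' < 2 * (2*m').choose (m'+1) := by nlinarith [hid, hCpos, h2]
    exact_mod_cast this
  -- the single term at m'+1 dominates the half-term
  have hmem : m' + 1 ∈ s := by simp only [hs, Finset.mem_Icc]; omega
  have hle : f (m'+1) ≤ ∑ k ∈ s, f k := Finset.single_le_sum hnonneg hmem
  have hfval : f (m'+1) = ((2*m').choose (m'+1) : ℝ) * (yi^m' * yj^m' * (yi - yj)) := by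
    simp only [hf]
    rw [show 2*m' - (m'+1) = m' - 1 from by omega]
    have hji : yj ^ (m'-1) * yj = yj ^ m' := by
      rw [← pow_succ]; congr 1; omega
    have hii : yi ^ (m'-1) * yi = yi ^ m' := by
      rw [← pow_succ]; congr 1; omega
    have h3 : yi ^ (m'+1) = yi ^ m' * yi := pow_succ yi m'
    have h4 : yj ^ (m'+1) = yj ^ m' * yj := pow_succ yj m'
    rw [mul_assoc, hji, mul_assoc, hii, h3, h4]
    ring
  have hX : (0:ℝ) < yi^m' * yj^m' * (yi - yj) := by
    have := sub_pos.mpr hgt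
    positivity
  have hlt : (1/2) * ((2*m').choose m' : ℝ) * yi^m' * yj^m' * (yi - yj) < f (m'+1) := by
    rw [hfval]
    nlinarith [mul_lt_mul_of_pos_right hC hX]
  have hsub := hlt.trans_le hle
  nlinarith [hsub, e1]
end

section
/- Fix integers m̃ and b with 1 ≤ b ≤ m̃ ≤ 2b−1 and m̃ ≥ 2, and an integer q ≥ 1. Let y_i, y_j > 0 with y_i + y_j = 1 and y_i > y_j. Then (1/(q+1)) C(m̃, b) y_i^{b−1} y_j^{m̃−b} + ∑_{k=b+1}^{m̃} C(m̃,k) y_i^{k−1} y_j^{m̃−k} > (1/(q+1)) C(m̃, b) y_j^{b−1} y_i^{m̃−b} + ∑_{k=b+1}^{m̃} C(m̃,k) y_j^{k−1} y_i^{m̃−k}. -/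
open Finset

lemma maj_aux_le (yi yj : ℝ) (hyj : 0 < yj) (hgt : yj < yi) {a c : ℕ} (h : c ≤ a) :
    yj ^ a * yi ^ c ≤ yi ^ a * yj ^ c := by
  obtain ⟨d, rfl⟩ := Nat.exists_eq_add_of_le h
  have h1 : yj ^ d ≤ yi ^ d := pow_le_pow_left₀ hyj.le hgt.le d
  have hyi : 0 < yi := hyj.trans hgt
  calc yj ^ (c + d) * yi ^ c = (yj ^ c * yi ^ c) * yj ^ d := by ring
    _ ≤ (yj ^ c * yi ^ c) * yi ^ d := by
        apply mul_le_mul_of_nonneg_left h1 (by positivity)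
    _ = yi ^ (c + d) * yj ^ c := by ring

lemma maj_aux_lt (yi yj : ℝ) (hyj : 0 < yj) (hgt : yj < yi) {a c : ℕ} (h : c < a) :
    yj ^ a * yi ^ c < yi ^ a * yj ^ c := by
  obtain ⟨d, rfl⟩ := Nat.exists_eq_add_of_le h.le
  have hd : d ≠ 0 := by omega
  have h1 : yj ^ d < yi ^ d := pow_lt_pow_left₀ hgt hyj.le hd
  have hyi : 0 < yi := hyj.trans hgt
  calc yj ^ (c + d) * yi ^ c = (yj ^ c * yi ^ c) * yj ^ d := by ring
    _ < (yj ^ c * yi ^ c) * yi ^ d := by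
        apply mul_lt_mul_of_pos_left h1 (by positivity)
    _ = yi ^ (c + d) * yj ^ c := by ring

theorem majority_subcase_2_4
    (mt b q : ℕ) (hb1 : 1 ≤ b) (hbm : b ≤ mt) (hmb : mt ≤ 2 * b - 1)
    (hmt : 2 ≤ mt) (hq : 1 ≤ q)
    (yi yj : ℝ) (hyi : 0 < yi) (hyj : 0 < yj) (hsum : yi + yj = 1) (hgt : yj < yi) :
    (1 / (q + 1 : ℝ)) * (mt.choose b : ℝ) * yj ^ (b - 1) * yi ^ (mt - b)
        + ∑ k ∈ Finset.Icc (b + 1) mt, (mt.choose k : ℝ) * yj ^ (k - 1) * yi ^ (mt - k)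
      < (1 / (q + 1 : ℝ)) * (mt.choose b : ℝ) * yi ^ (b - 1) * yj ^ (mt - b)
        + ∑ k ∈ Finset.Icc (b + 1) mt, (mt.choose k : ℝ) * yi ^ (k - 1) * yj ^ (mt - k) := by
  have hC : (0 : ℝ) < (1 / (q + 1 : ℝ)) * (mt.choose b : ℝ) := by
    have := Nat.choose_pos hbm
    positivity
  rcases eq_or_lt_of_le hbm with rfl | hblt
  · -- b = mt : sum is empty, strictness from the first term
    rw [Finset.Icc_eq_empty (by omega), Finset.sum_empty, Finset.sum_empty]
    simp only [add_zero]
    have h := maj_aux_lt yi yj hyj hgt (a := b - 1) (c := b - b) (by omega)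
    calc (1 / (q + 1 : ℝ)) * (b.choose b : ℝ) * yj ^ (b - 1) * yi ^ (b - b)
        = (1 / (q + 1 : ℝ)) * (b.choose b : ℝ) * (yj ^ (b - 1) * yi ^ (b - b)) := by ring
      _ < (1 / (q + 1 : ℝ)) * (b.choose b : ℝ) * (yi ^ (b - 1) * yj ^ (b - b)) :=
          mul_lt_mul_of_pos_left h hC
      _ = (1 / (q + 1 : ℝ)) * (b.choose b : ℝ) * yi ^ (b - 1) * yj ^ (b - b) := by ring
  · -- b < mt : strictness from the k = mt term in the sum
    have hfirst : (1 / (q + 1 : ℝ)) * (mt.choose b : ℝ) * yj ^ (b - 1) * yi ^ (mt - b)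
        ≤ (1 / (q + 1 : ℝ)) * (mt.choose b : ℝ) * yi ^ (b - 1) * yj ^ (mt - b) := by
      have h := maj_aux_le yi yj hyj hgt (a := b - 1) (c := mt - b) (by omega)
      calc (1 / (q + 1 : ℝ)) * (mt.choose b : ℝ) * yj ^ (b - 1) * yi ^ (mt - b)
          = (1 / (q + 1 : ℝ)) * (mt.choose b : ℝ) * (yj ^ (b - 1) * yi ^ (mt - b)) := by ring
        _ ≤ (1 / (q + 1 : ℝ)) * (mt.choose b : ℝ) * (yi ^ (b - 1) * yj ^ (mt - b)) :=
            mul_le_mul_of_nonneg_left h hC.le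
        _ = (1 / (q + 1 : ℝ)) * (mt.choose b : ℝ) * yi ^ (b - 1) * yj ^ (mt - b) := by ring
    have hsumlt : ∑ k ∈ Finset.Icc (b + 1) mt, (mt.choose k : ℝ) * yj ^ (k - 1) * yi ^ (mt - k)
        < ∑ k ∈ Finset.Icc (b + 1) mt, (mt.choose k : ℝ) * yi ^ (k - 1) * yj ^ (mt - k) := by
      apply Finset.sum_lt_sum
      · intro k hk
        rw [Finset.mem_Icc] at hk
        have hCk : (0 : ℝ) ≤ (mt.choose k : ℝ) := by positivity
        have h := maj_aux_le yi yj hyj hgt (a := k - 1) (c := mt - k) (by omega)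
        calc (mt.choose k : ℝ) * yj ^ (k - 1) * yi ^ (mt - k)
            = (mt.choose k : ℝ) * (yj ^ (k - 1) * yi ^ (mt - k)) := by ring
          _ ≤ (mt.choose k : ℝ) * (yi ^ (k - 1) * yj ^ (mt - k)) :=
              mul_le_mul_of_nonneg_left h hCk
          _ = (mt.choose k : ℝ) * yi ^ (k - 1) * yj ^ (mt - k) := by ring
      · refine ⟨mt, Finset.mem_Icc.mpr ⟨by omega, le_refl _⟩, ?_⟩
        have hCk : (0 : ℝ) < (mt.choose mt : ℝ) := by
          simp [Nat.choose_self]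
        have h := maj_aux_lt yi yj hyj hgt (a := mt - 1) (c := mt - mt) (by omega)
        calc (mt.choose mt : ℝ) * yj ^ (mt - 1) * yi ^ (mt - mt)
            = (mt.choose mt : ℝ) * (yj ^ (mt - 1) * yi ^ (mt - mt)) := by ring
          _ < (mt.choose mt : ℝ) * (yi ^ (mt - 1) * yj ^ (mt - mt)) :=
              mul_lt_mul_of_pos_left h hCk
          _ = (mt.choose mt : ℝ) * yi ^ (mt - 1) * yj ^ (mt - mt) := by ring
    exact add_lt_add_of_le_of_lt hfirst hsumlt
end

section
/- Suppose ρ : I × I → ℝ has the two-step form ρ_{ij} = x_j λ_{ij} r_{ij}, the second step treats twin strategies i and j identically (r_{ij} = r_{ji}, and r_{ik} = r_{jk}, r_{ki} = r_{kj} for all k ∉ {i,j}), and x_i, x_j > 0. Then the difference of per-capita growth rates under the mother equation satisfies ẋ_i/x_i − ẋ_j/x_j = ∑_{k ∉ {i,j}} x_k r_{ki}(λ_{ki} − λ_{kj}) + ∑_{k ∉ {i,j}} x_k r_{ik}(λ_{jk} − λ_{ik}) + r_{ij}(x_i + x_j)(λ_{ji} − λ_{ij}). -/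
open Finset

theorem twin_growth_rate_difference {I : Type*} [Fintype I] [DecidableEq I]
    (x : I → ℝ) (lam r : I → I → ℝ) (i j : I) (hij : i ≠ j)
    (hxi : 0 < x i) (hxj : 0 < x j)
    (hr_sym : r i j = r j i)
    (hr_out : ∀ k, k ≠ i → k ≠ j → r i k = r j k)
    (hr_in : ∀ k, k ≠ i → k ≠ j → r k i = r k j)
    (ρ : I → I → ℝ) (hρ : ∀ a b, ρ a b = x b * lam a b * r a b)
    (xdot : I → ℝ)
    (hxdot : ∀ a, xdot a = (∑ k, x k * ρ k a) - x a * (∑ k, ρ a k)) :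
    xdot i / x i - xdot j / x j =
      (∑ k ∈ Finset.univ \ {i, j}, x k * r k i * (lam k i - lam k j))
      + (∑ k ∈ Finset.univ \ {i, j}, x k * r i k * (lam j k - lam i k))
      + r i j * (x i + x j) * (lam j i - lam i j) := by
  have key : ∀ a, x a ≠ 0 →
      xdot a / x a = ∑ k, x k * (lam k a * r k a - lam a k * r a k) := by
    intro a ha
    rw [hxdot a]
    have h1 : (∑ k, x k * ρ k a) = x a * ∑ k, x k * (lam k a * r k a) := by
      rw [Finset.mul_sum]
      exact Finset.sum_congr rfl fun k _ => by rw [hρ]; ring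
    have h2 : (∑ k, ρ a k) = ∑ k, x k * (lam a k * r a k) := by
      exact Finset.sum_congr rfl fun k _ => by rw [hρ]; ring
    rw [h1, h2, ← mul_sub, mul_comm, mul_div_assoc, div_self ha,
      mul_one, ← Finset.sum_sub_distrib]
    exact Finset.sum_congr rfl fun k _ => by ring
  rw [key i hxi.ne', key j hxj.ne', ← Finset.sum_sub_distrib]
  have hsub : ({i, j} : Finset I) ⊆ Finset.univ := Finset.subset_univ _
  have hsplit := Finset.sum_sdiff (f := fun k =>
      x k * (lam k i * r k i - lam i k * r i k)
      - x k * (lam k j * r k j - lam j k * r j k)) hsub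
  rw [← hsplit]
  have hpair : ∑ k ∈ ({i, j} : Finset I), (x k * (lam k i * r k i - lam i k * r i k)
      - x k * (lam k j * r k j - lam j k * r j k))
      = r i j * (x i + x j) * (lam j i - lam i j) := by
    rw [Finset.sum_pair hij, hr_sym]; ring
  rw [hpair]
  congr 1
  rw [← Finset.sum_add_distrib]
  refine Finset.sum_congr rfl fun k hk => ?_
  simp only [Finset.mem_sdiff, Finset.mem_insert, Finset.mem_singleton, not_or] at hk
  obtain ⟨-, hki, hkj⟩ := hk
  linear_combination (x k * lam k j) * hr_in k hki hkj - (x k * lam j k) * hr_out k hki hkj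
end

section
/- Consider the two-strategy dynamics ẋ_1 = x_1(1−x_1) h(ε, x_1) on [0,1], where h is jointly continuous, Lipschitz in x_1 uniformly in ε, and h(0, x_1) > 0 for x_1 ∈ [0, 1/2) while h(0, x_1) < 0 for x_1 ∈ (1/2, 1]. Then for every α ∈ (0, 1/2) there exists ε̄ > 0 such that for all ε ∈ [0, ε̄] and every initial condition x_1(0) ∈ (0,1), the solution of ẋ_1 = x_1(1−x_1)h(ε, x_1) satisfies 1/2 − α ≤ liminf_{t→∞} x_1(t) ≤ limsup_{t→∞} x_1(t) ≤ 1/2 + α. -/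
/-!
By compactness of `[0, 1/2 - α]` and `[1/2 + α, 1]` and joint continuity of `h`, the strict
sign conditions on `h 0` persist for all small `ε`. Then the vector field `f s = s (1 - s) h ε s`
is positive on `(0, 1/2 - α]` and negative on `[1/2 + α, 1)`. A level at which `f` points inward
can never be crossed, and between `min (x 0) (1/2 - α)` and `1/2 - α` the speed is bounded below,
so the solution enters `[1/2 - α, 1/2 + α]` in finite time and stays there.
-/

open Filter Set Topology Function

theorem IsCompact.eventually_forall_mem_of_isOpen {X Y Z : Type*} [TopologicalSpace X]
    [TopologicalSpace Y] [TopologicalSpace Z] {h : X → Y → Z} (hh : Continuous (uncurry h))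
    {K : Set Y} (hK : IsCompact K) {U : Set Z} (hU : IsOpen U) {x₀ : X}
    (hx₀ : ∀ y ∈ K, h x₀ y ∈ U) : ∀ᶠ x in 𝓝 x₀, ∀ y ∈ K, h x y ∈ U :=
  hK.eventually_forall_of_forall_eventually fun y hy => (hU.preimage hh).mem_nhds (hx₀ y hy)

section AutonomousODE

variable {f x : ℝ → ℝ}

theorem Ici_forwardInvariant_of_pos (hx : ∀ t, HasDerivAt x (f (x t)) t) {b : ℝ}
    (hb : 0 < f b) {t₀ t : ℝ} (ht : t₀ ≤ t) (h₀ : b ≤ x t₀) : b ≤ x t := by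
  have hxc : Continuous x := continuous_iff_continuousAt.2 fun t => (hx t).continuousAt
  have key := image_le_of_deriv_right_lt_deriv_boundary' (f := fun t => -x t)
    (f' := fun t => -f (x t)) (B := fun _ => -b) (B' := fun _ => 0)
    hxc.neg.continuousOn (fun t _ => (hx t).neg.hasDerivWithinAt) (neg_le_neg h₀)
    continuousOn_const (fun t _ => hasDerivWithinAt_const t _ _)
    (fun t _ hxt => by rw [neg_inj.1 hxt]; exact neg_neg_of_pos hb) ⟨ht, le_rfl⟩
  exact neg_le_neg_iff.1 key

theorem eventually_ge_of_pos_on_Icc (hx : ∀ t, HasDerivAt x (f (x t)) t) {a : ℝ}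
    (hf : ContinuousOn f (Icc (min (x 0) a) a))
    (hpos : ∀ s ∈ Icc (min (x 0) a) a, 0 < f s) : ∀ᶠ t in atTop, a ≤ x t := by
  set c := min (x 0) a
  have hca : c ≤ a := min_le_right _ _
  suffices ∃ T, a ≤ x T by
    obtain ⟨T, hT⟩ := this
    exact eventually_atTop.2
      ⟨T, fun t ht => Ici_forwardInvariant_of_pos hx (hpos a ⟨hca, le_rfl⟩) ht hT⟩
  by_contra! hlt
  obtain ⟨s₀, hs₀, hmin⟩ := isCompact_Icc.exists_isMinOn (nonempty_Icc.2 hca) hf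
  set δ := f s₀
  have hδ : 0 < δ := hpos s₀ hs₀
  have hc : ∀ t, 0 ≤ t → c ≤ x t := fun t ht =>
    Ici_forwardInvariant_of_pos hx (hpos c ⟨le_rfl, hca⟩) ht (min_le_left _ _)
  have hgrowth : ∀ t, 0 ≤ t → δ * (t - 0) ≤ x t - x 0 := by
    have hxc : Continuous x := continuous_iff_continuousAt.2 fun t => (hx t).continuousAt
    refine fun t ht => (convex_Ici 0).mul_sub_le_image_sub_of_le_deriv hxc.continuousOn
      (fun t _ => (hx t).differentiableAt.differentiableWithinAt) (fun t ht => ?_)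
      0 self_mem_Ici t ht ht
    rw [interior_Ici] at ht
    rw [(hx t).deriv]
    exact hmin ⟨hc t (le_of_lt ht), (hlt t).le⟩
  have hT : 0 ≤ (a - x 0) / δ := div_nonneg (sub_nonneg.2 (hlt 0).le) hδ.le
  have := hgrowth _ hT
  rw [sub_zero, mul_div_cancel₀ _ hδ.ne'] at this
  linarith [hlt ((a - x 0) / δ)]

theorem eventually_le_of_neg_on_Icc (hx : ∀ t, HasDerivAt x (f (x t)) t) {b : ℝ}
    (hf : ContinuousOn f (Icc b (max (x 0) b)))
    (hneg : ∀ s ∈ Icc b (max (x 0) b), f s < 0) : ∀ᶠ t in atTop, x t ≤ b := by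
  have hmem : ∀ s ∈ Icc (min (-x 0) (-b)) (-b), -s ∈ Icc b (max (x 0) b) := fun s hs =>
    ⟨le_neg.2 hs.2, neg_le.2 (by rw [← min_neg_neg]; exact hs.1)⟩
  have hev := eventually_ge_of_pos_on_Icc (f := fun s => -f (-s)) (x := fun t => -x t) (a := -b)
    (fun t => by rw [neg_neg]; exact (hx t).neg)
    (hf.comp continuousOn_neg hmem).neg (fun s hs => neg_pos.2 (hneg _ (hmem s hs)))
  exact hev.mono fun t ht => neg_le_neg_iff.1 ht

end AutonomousODE

theorem dominated_survival_two_strategies_general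
    (h : ℝ → ℝ → ℝ) (hcont : Continuous fun p : ℝ × ℝ => h p.1 p.2)
    (hpos : ∀ s, 0 ≤ s → s < 1/2 → 0 < h 0 s)
    (hneg : ∀ s, 1/2 < s → s ≤ 1 → h 0 s < 0) :
    ∀ α ∈ Ioo (0:ℝ) (1/2), ∃ εbar > (0:ℝ), ∀ ε ∈ Icc (0:ℝ) εbar,
      ∀ x : ℝ → ℝ,
        (∀ t, HasDerivAt x (x t * (1 - x t) * h ε (x t)) t) →
        x 0 ∈ Ioo (0:ℝ) 1 →
        1/2 - α ≤ Filter.liminf x atTop ∧ Filter.limsup x atTop ≤ 1/2 + α := by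
  rintro α ⟨hα0, hα⟩
  have hsigns : ∀ᶠ ε in 𝓝 0, (∀ s ∈ Icc 0 (1/2 - α), h ε s ∈ Ioi 0) ∧
      ∀ s ∈ Icc (1/2 + α) 1, h ε s ∈ Iio 0 :=
    (isCompact_Icc.eventually_forall_mem_of_isOpen hcont isOpen_Ioi
        fun s hs => hpos s hs.1 (by linarith [hs.2])).and
      (isCompact_Icc.eventually_forall_mem_of_isOpen hcont isOpen_Iio
        fun s hs => hneg s (by linarith [hs.1]) hs.2)
  obtain ⟨εbar, hεbar, hsmall⟩ :=
    nhdsGE_basis_Icc.eventually_iff.1 (hsigns.filter_mono nhdsWithin_le_nhds)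
  refine ⟨εbar, hεbar, fun ε hε x hx hx0 => ?_⟩
  obtain ⟨hposε, hnegε⟩ := hsmall hε
  have hf : Continuous fun s => s * (1 - s) * h ε s := by
    have := hcont.uncurry_left ε
    fun_prop
  have hmin : 0 < min (x 0) (1/2 - α) := lt_min hx0.1 (by linarith)
  have hmax : max (x 0) (1/2 + α) < 1 := max_lt hx0.2 (by linarith)
  have hlower := eventually_ge_of_pos_on_Icc hx hf.continuousOn fun s hs =>
    mul_pos (mul_pos (hmin.trans_le hs.1) (by linarith [hs.2]))
      (hposε s ⟨hmin.le.trans hs.1, hs.2⟩)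
  have hupper := eventually_le_of_neg_on_Icc hx hf.continuousOn fun s hs =>
    mul_neg_of_pos_of_neg (mul_pos (by linarith [hs.1]) (by linarith [hs.2]))
      (hnegε s ⟨hs.1, hs.2.trans hmax.le⟩)
  exact ⟨le_liminf_of_le (isBoundedUnder_of_eventually_le hupper).isCoboundedUnder_ge hlower,
    limsup_le_of_le (isBoundedUnder_of_eventually_ge hlower).isCoboundedUnder_le hupper⟩

theorem dominated_survival_two_strategies
    (h : ℝ → ℝ → ℝ) (hcont : Continuous fun p : ℝ × ℝ => h p.1 p.2)
    (K : NNReal) (hLip : ∀ ε, LipschitzWith K (h ε))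
    (hpos : ∀ s, 0 ≤ s → s < 1/2 → 0 < h 0 s)
    (hneg : ∀ s, 1/2 < s → s ≤ 1 → h 0 s < 0) :
    ∀ α ∈ Ioo (0:ℝ) (1/2), ∃ εbar > (0:ℝ), ∀ ε ∈ Icc (0:ℝ) εbar,
      ∀ x : ℝ → ℝ,
        (∀ t, HasDerivAt x (x t * (1 - x t) * h ε (x t)) t) →
        x 0 ∈ Ioo (0:ℝ) 1 →
        1/2 - α ≤ Filter.liminf x atTop ∧ Filter.limsup x atTop ≤ 1/2 + α :=
  dominated_survival_two_strategies_general h hcont hpos hneg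
end
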